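/- When m = k, the number of monomials of weighted degree k in variables indexed by Lyndon words of length at most k over d letters (with x_w given weight |w|) equals d^k. -/

import Mathlib

/-- A nonempty word `w` over a linearly ordered alphabet is a Lyndon word if
for every factorization `w = p ++ q` into nonempty words, `w < q` in the
lexicographic order on words. -/
def IsLyndon {α : Type*} [LinearOrder α] (w : List α) : Prop :=
  w ≠ [] ∧ ∀ p q : List α, p ≠ [] → q ≠ [] → w = p ++ q → w < q

set_option linter.unusedSectionVars false
set_option linter.deprecated false

namespace CFL
variable {α : Type*} [LinearOrder α]

theorem lt_iff {l₁ l₂ : List α} : l₁ < l₂ ↔ List.Lex (· < ·) l₁ l₂ := Iff.rfl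

theorem lt_append_right {l s : List α} (h : s ≠ []) : l < l ++ s := by
  rw [lt_iff]
  induction l with
  | nil => cases s with
    | nil => exact absurd rfl h
    | cons a t => exact List.Lex.nil
  | cons a t ih => exact List.Lex.cons ih

theorem le_of_prefix {l₁ l₂ : List α} (h : l₁ <+: l₂) : l₁ ≤ l₂ := by
  obtain ⟨t, rfl⟩ := h
  rcases eq_or_ne t [] with rfl | ht
  · simp
  · exact le_of_lt (lt_append_right ht)

theorem lex_append {l₁ l₂ : List α} (h : List.Lex (· < ·) l₁ l₂) (hp : ¬ l₁ <+: l₂)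
    (t₁ t₂ : List α) : List.Lex (· < ·) (l₁ ++ t₁) (l₂ ++ t₂) := by
  induction h with
  | nil => exact absurd (List.nil_prefix) hp
  | @rel a l₁ b l₂ hab => exact List.Lex.rel hab
  | @cons a l₁ l₂ h ih =>
      refine List.Lex.cons (ih ?_)
      intro hpre
      exact hp (List.cons_prefix_cons.mpr ⟨rfl, hpre⟩)

theorem append_left_lt {l t₁ t₂ : List α} : l ++ t₁ < l ++ t₂ ↔ t₁ < t₂ := by
  rw [lt_iff, lt_iff]
  induction l with
  | nil => simp
  | cons a l ih => simpa [List.lex_cons_iff] using ih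

theorem isLyndon_singleton (a : α) : IsLyndon [a] := by
  refine ⟨by simp, fun p q hp hq hpq => ?_⟩
  exfalso
  have h1 : p.length + q.length = 1 := by
    simpa using (congrArg List.length hpq).symm
  have h2 : 0 < p.length := List.length_pos_iff.mpr hp
  have h3 : 0 < q.length := List.length_pos_iff.mpr hq
  omega

theorem lyn_ne_nil {w : List α} (h : IsLyndon w) : w ≠ [] := h.1

theorem lyn_lt_suffix {w p q : List α} (h : IsLyndon w) (hp : p ≠ []) (hq : q ≠ [])
    (e : w = p ++ q) : w < q := h.2 p q hp hq e

theorem append_lt_right {u v : List α} (hu : IsLyndon u) (hv : IsLyndon v) (huv : u < v) :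
    u ++ v < v := by
  by_cases hpre : u <+: v
  · obtain ⟨z, hz⟩ := hpre
    have hzne : z ≠ [] := by
      rintro rfl
      rw [List.append_nil] at hz
      exact absurd huv (by simp [hz])
    have h1 : v < z := lyn_lt_suffix hv (lyn_ne_nil hu) hzne hz.symm
    have : u ++ v < u ++ z := append_left_lt.mpr h1
    rwa [hz] at this
  · have := lex_append (lt_iff.mp huv) hpre v []
    rw [List.append_nil] at this
    exact lt_iff.mpr this

theorem lyn_append {u v : List α} (hu : IsLyndon u) (hv : IsLyndon v) (huv : u < v) :
    IsLyndon (u ++ v) := by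
  have huv' : u ++ v < v := append_lt_right hu hv huv
  refine ⟨by simp [lyn_ne_nil hu], fun p q hp hq e => ?_⟩
  rcases le_or_gt p.length u.length with hle | hlt
  · -- p is a prefix of u
    have hpu : p <+: u := by
      have h1 : p <+: u ++ v := ⟨q, e.symm⟩
      exact List.prefix_of_prefix_length_le h1 (List.prefix_append u v) hle
    obtain ⟨s, hsu⟩ := hpu
    have hq' : q = s ++ v := by
      have : p ++ q = p ++ (s ++ v) := by rw [← e, ← List.append_assoc, hsu]
      exact List.append_cancel_left this
    rcases eq_or_ne s [] with rfl | hs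
    · rw [hq']
      simpa using huv'
    · have hus : u < s := lyn_lt_suffix hu hp hs hsu.symm
      have hnp : ¬ u <+: s := by
        intro hcon
        have hc := hcon.length_le
        have hs' : s.length + p.length = u.length := by
          simpa [Nat.add_comm] using congrArg List.length hsu
        have hp' : 0 < p.length := List.length_pos_iff.mpr hp
        omega
      have := lex_append (lt_iff.mp hus) hnp v v
      rw [hq']
      exact lt_iff.mpr this
  · -- u is a proper prefix of p, q is a proper suffix of v
    have hup : u <+: p := by
      have h1 : p <+: u ++ v := ⟨q, e.symm⟩
      exact List.prefix_of_prefix_length_le (List.prefix_append u v) h1 (le_of_lt hlt)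
    obtain ⟨r, hrp⟩ := hup
    have hr : r ≠ [] := by
      rintro rfl
      rw [List.append_nil] at hrp
      rw [hrp] at hlt
      exact lt_irrefl _ hlt
    have hv' : v = r ++ q := by
      have : u ++ (r ++ q) = u ++ v := by rw [← List.append_assoc, hrp, e]
      exact (List.append_cancel_left this).symm
    exact lt_trans huv' (lyn_lt_suffix hv hr hq hv')

/-- Insert a Lyndon word at the front of a nonincreasing factorization, merging as needed. -/
def insertF : List α → List (List α) → List (List α)
  | u, [] => [u]
  | u, v :: l => if u < v then insertF (u ++ v) l else u :: v :: l

theorem insertF_spec : ∀ (l : List (List α)) (u : List α), IsLyndon u →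
    (∀ x ∈ l, IsLyndon x) → l.Chain' (fun a b => b ≤ a) →
    (∀ x ∈ insertF u l, IsLyndon x) ∧ (insertF u l).Chain' (fun a b => b ≤ a) ∧
      (insertF u l).flatten = u ++ l.flatten
  | [], u, hu, _, _ => by simp [insertF, hu, List.Chain', List.isChain_singleton]
  | v :: l, u, hu, hl, hc => by
    rw [insertF]
    split
    · next h =>
      have hv : IsLyndon v := hl v (by simp)
      obtain ⟨h1, h2, h3⟩ := insertF_spec l (u ++ v) (lyn_append hu hv h)
        (fun x hx => hl x (by simp [hx])) hc.tail
      exact ⟨h1, h2, by simp [h3]⟩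
    · next h =>
      refine ⟨?_, ?_, by simp⟩
      · intro x hx
        rcases List.mem_cons.mp hx with rfl | hx
        · exact hu
        · exact hl x hx
      · exact List.IsChain.cons_cons (not_lt.mp h) hc

/-- The Chen–Fox–Lyndon factorization of a word. -/
def factor : List α → List (List α)
  | [] => []
  | a :: w => insertF [a] (factor w)

theorem factor_spec (w : List α) :
    (∀ x ∈ factor w, IsLyndon x) ∧ (factor w).Chain' (fun a b => b ≤ a) ∧
      (factor w).flatten = w := by
  induction w with
  | nil => simp [factor, List.Chain', List.isChain_nil]
  | cons a w ih =>
    obtain ⟨h1, h2, h3⟩ := insertF_spec (factor w) [a] (isLyndon_singleton a) ih.1 ih.2.1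
    exact ⟨h1, h2, by simp [factor, h3, ih.2.2]⟩

/-- A nonempty prefix of a flatten splits as some whole factors plus a prefix of the next. -/
theorem prefix_flatten_split : ∀ (l : List (List α)) (r : List α), r <+: l.flatten → r ≠ [] →
    ∃ l₁ x l₂ p, l = l₁ ++ x :: l₂ ∧ r = l₁.flatten ++ p ∧ p ≠ [] ∧ p <+: x
  | [], r, hpre, hne => by
    simp at hpre
    exact absurd hpre hne
  | x :: l, r, hpre, hne => by
    rcases le_or_gt r.length x.length with hle | hlt
    · refine ⟨[], x, l, r, rfl, by simp, hne, ?_⟩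
      have : (x :: l).flatten = x ++ l.flatten := by simp
      rw [this] at hpre
      exact List.prefix_of_prefix_length_le hpre (List.prefix_append x l.flatten)
        (by simpa using hle)
    · have hxr : x <+: r := by
        have : (x :: l).flatten = x ++ l.flatten := by simp
        rw [this] at hpre
        exact List.prefix_of_prefix_length_le (List.prefix_append x l.flatten) hpre
          (le_of_lt hlt)
      obtain ⟨r', hr'⟩ := hxr
      have hr'ne : r' ≠ [] := by
        rintro rfl
        rw [List.append_nil] at hr'
        rw [hr'] at hlt
        exact lt_irrefl _ hlt
      have hr'pre : r' <+: l.flatten := by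
        obtain ⟨t, ht⟩ := hpre
        refine ⟨t, ?_⟩
        have : x ++ (r' ++ t) = x ++ l.flatten := by
          rw [← List.append_assoc, hr']
          simpa using ht
        exact List.append_cancel_left this
      obtain ⟨l₁, y, l₂, p, e1, e2, e3, e4⟩ := prefix_flatten_split l r' hr'pre hr'ne
      exact ⟨x :: l₁, y, l₂, p, by simp [e1], by simp [← hr', e2], e3, e4⟩

theorem elem_le_head {v : List α} {t : List (List α)} 
    (hc : (v :: t).Chain' (fun a b : List α => b ≤ a)) {x : List α} (hx : x ∈ t) : x ≤ v := by
  have hp := List.isChain_iff_pairwise.mp hc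
  exact List.rel_of_pairwise_cons hp hx

/-- Uniqueness of the CFL factorization. -/
theorem cf_unique : ∀ (l₁ l₂ : List (List α)), (∀ x ∈ l₁, IsLyndon x) →
    l₁.Chain' (fun a b => b ≤ a) → (∀ x ∈ l₂, IsLyndon x) →
    l₂.Chain' (fun a b => b ≤ a) → l₁.flatten = l₂.flatten → l₁ = l₂ := by
  -- first, a head lemma packaged inside
  have head : ∀ (u v : List α) (s t : List (List α)), IsLyndon u → IsLyndon v →
      (∀ x ∈ t, IsLyndon x) → (v :: t).Chain' (fun a b => b ≤ a) →
      u ++ s.flatten = v ++ t.flatten → v.length ≤ u.length → u = v := by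
    intro u v s t hu hv ht hct hj hlen
    have hvu : v <+: u := by
      have h1 : v <+: u ++ s.flatten := ⟨t.flatten, hj.symm⟩
      exact List.prefix_of_prefix_length_le h1 (List.prefix_append u s.flatten) hlen
    obtain ⟨r, hr⟩ := hvu
    rcases eq_or_ne r [] with rfl | hrne
    · simpa using hr.symm
    -- r is a nonempty prefix of t.flatten
    have hrt : r <+: t.flatten := by
      refine ⟨s.flatten, ?_⟩
      have : v ++ (r ++ s.flatten) = v ++ t.flatten := by
        rw [← List.append_assoc, hr, hj]
      exact List.append_cancel_left this
    obtain ⟨t₁, x, t₂, p, e1, e2, e3, e4⟩ := prefix_flatten_split t r hrt hrne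
    exfalso
    have hxt : x ∈ t := by rw [e1]; simp
    have hpx : p ≤ x := le_of_prefix e4
    have hxv : x ≤ v := elem_le_head hct hxt
    have hvu' : v ≤ u := le_of_prefix ⟨r, hr⟩
    have hup : u < p := by
      refine lyn_lt_suffix (p := v ++ t₁.flatten) (q := p) hu ?_ e3 ?_
      · simp [lyn_ne_nil hv]
      · rw [← hr, e2, ← List.append_assoc]
    exact absurd (lt_of_lt_of_le hup (le_trans hpx (le_trans hxv hvu'))) (lt_irrefl u)
  intro l₁
  induction l₁ with
  | nil =>
    intro l₂ _ _ h2 _ hj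
    cases l₂ with
    | nil => rfl
    | cons v t =>
      exfalso
      have : v ≠ [] := lyn_ne_nil (h2 v (by simp))
      have hj' : v ++ t.flatten = [] := by simpa using hj.symm
      simp [this] at hj'
  | cons u s ih =>
    intro l₂ h1 hc1 h2 hc2 hj
    cases l₂ with
    | nil =>
      exfalso
      have : u ≠ [] := lyn_ne_nil (h1 u (by simp))
      have hj' : u ++ s.flatten = [] := by simpa using hj
      simp [this] at hj'
    | cons v t =>
      have hu : IsLyndon u := h1 u (by simp)
      have hv : IsLyndon v := h2 v (by simp)
      have hj' : u ++ s.flatten = v ++ t.flatten := by simpa using hj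
      have huv : u = v := by
        rcases le_total v.length u.length with hle | hle
        · exact head u v s t hu hv (fun x hx => h2 x (by simp [hx])) hc2 hj' hle
        · exact (head v u t s hv hu (fun x hx => h1 x (by simp [hx])) hc1 hj'.symm hle).symm
      subst huv
      have hflatten : s.flatten = t.flatten := List.append_cancel_left hj'
      have : s = t := ih t (fun x hx => h1 x (by simp [hx])) hc1.tail
        (fun x hx => h2 x (by simp [hx])) hc2.tail hflatten
      rw [this]

theorem msum {β : Type*} [DecidableEq β] (f : β → ℕ) (s : Multiset β) :
    (Multiset.toFinsupp s).sum (fun w n => n * f w) = (s.map f).sum := by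
  induction s using Multiset.induction with
  | empty => simp
  | cons a s ih =>
    have h1 : (a ::ₘ s) = s + {a} := by
      rw [add_comm, Multiset.singleton_add]
    rw [h1, Multiset.toFinsupp_add, Finsupp.sum_add_index' (by simp) (fun a b c => add_mul b c _),
      ih, Multiset.toFinsupp_singleton, Finsupp.sum_single_index (by simp)]
    simp [add_comm]

theorem length_le_of_mem_flatten {β : Type*} {x : List β} {l : List (List β)} (h : x ∈ l) :
    x.length ≤ l.flatten.length := by
  rw [List.length_flatten]
  exact List.single_le_sum (by simp) _ (List.mem_map_of_mem (f := List.length) h)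

end CFL

open CFL

/-- for m = k, the number of monomials of weighted degree k in
variables indexed by Lyndon words of length ≤ k over d letters (x_w having
weight |w|) equals d^k. -/
theorem count_weighted_monomials_eq_pow (d k : ℕ) :
    Nat.card {e : List (Fin d) →₀ ℕ //
        (∀ w ∈ e.support, IsLyndon w ∧ w.length ≤ k) ∧
          (e.sum fun w n => n * w.length) = k} = d ^ k := by
  classical
  set r : List (Fin d) → List (Fin d) → Prop := fun a b => b ≤ a with hr
  haveI : IsTrans (List (Fin d)) r := ⟨fun a b c h1 h2 => le_trans h2 h1⟩
  haveI : IsAntisymm (List (Fin d)) r := ⟨fun a b h1 h2 => le_antisymm h2 h1⟩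
  haveI : IsTotal (List (Fin d)) r := ⟨fun a b => le_total b a⟩
  haveI : DecidableRel r := fun a b => inferInstanceAs (Decidable (b ≤ a))
  set G : {w : List (Fin d) // w.length = k} → {e : List (Fin d) →₀ ℕ //
        (∀ w ∈ e.support, IsLyndon w ∧ w.length ≤ k) ∧
          (e.sum fun w n => n * w.length) = k} := fun w =>
    ⟨Multiset.toFinsupp ↑(factor w.1), by
      constructor
      · intro x hx
        rw [Multiset.toFinsupp_support, Multiset.mem_toFinset, Multiset.mem_coe] at hx
        refine ⟨(factor_spec w.1).1 x hx, ?_⟩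
        have := length_le_of_mem_flatten hx
        rw [(factor_spec w.1).2.2, w.2] at this
        exact this
      · rw [msum, Multiset.map_coe, Multiset.sum_coe, ← List.length_flatten,
          (factor_spec w.1).2.2, w.2]⟩ with hG
  have hGbij : Function.Bijective G := by
    constructor
    · rintro ⟨w₁, h₁⟩ ⟨w₂, h₂⟩ he
      have he' : ((factor w₁ : List (List (Fin d))) : Multiset (List (Fin d)))
          = ((factor w₂ : List (List (Fin d))) : Multiset (List (Fin d))) :=
        Multiset.toFinsupp.injective (congrArg Subtype.val he)
      have hperm : List.Perm (factor w₁) (factor w₂) := Multiset.coe_eq_coe.mp he'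
      have hsort₁ : List.Pairwise r (factor w₁) :=
        List.isChain_iff_pairwise.mp (factor_spec w₁).2.1
      have hsort₂ : List.Pairwise r (factor w₂) :=
        List.isChain_iff_pairwise.mp (factor_spec w₂).2.1
      have : factor w₁ = factor w₂ := List.Perm.eq_of_pairwise (fun a b _ _ h1 h2 => le_antisymm h2 h1) hsort₁ hsort₂ hperm
      have : (factor w₁).flatten = (factor w₂).flatten := by rw [this]
      rw [(factor_spec w₁).2.2, (factor_spec w₂).2.2] at this
      exact Subtype.ext this
    · rintro ⟨e, h1, h2⟩
      set M : Multiset (List (Fin d)) := Finsupp.toMultiset e with hM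
      set L : List (List (Fin d)) := Multiset.sort M r with hL
      have hLmem : ∀ x ∈ L, x ∈ e.support := by
        intro x hx
        rw [hL, Multiset.mem_sort, hM, Finsupp.mem_toMultiset] at hx
        exact hx
      have hLlyn : ∀ x ∈ L, IsLyndon x := fun x hx => (h1 x (hLmem x hx)).1
      have hLsort : List.Pairwise r L := Multiset.pairwise_sort M r
      have hLchain : L.Chain' (fun a b => b ≤ a) := List.isChain_iff_pairwise.mpr hLsort
      have hMeq : (↑L : Multiset (List (Fin d))) = M := Multiset.sort_eq M r
      have hlen : L.flatten.length = k := by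
        rw [List.length_flatten, ← Multiset.sum_coe, ← Multiset.map_coe, hMeq, hM,
          ← msum, ← Multiset.toFinsupp_symm_apply, AddEquiv.apply_symm_apply]
        exact h2
      refine ⟨⟨L.flatten, hlen⟩, ?_⟩
      have hfac : factor L.flatten = L := by
        refine cf_unique (factor L.flatten) L (factor_spec L.flatten).1 (factor_spec L.flatten).2.1
          hLlyn hLchain ?_
        rw [(factor_spec L.flatten).2.2]
      apply Subtype.ext
      show Multiset.toFinsupp ↑(factor L.flatten) = e
      rw [hfac, hMeq, hM, ← Multiset.toFinsupp_symm_apply, AddEquiv.apply_symm_apply]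
  rw [← Nat.card_eq_of_bijective G hGbij]
  have e1 : {w : List (Fin d) // w.length = k} ≃ (Fin k → Fin d) :=
    Equiv.trans ⟨fun x => ⟨x.1, x.2⟩, fun v => ⟨v.1, v.2⟩, fun _ => rfl, fun _ => rfl⟩
      (Equiv.vectorEquivFin (Fin d) k)
  rw [Nat.card_congr e1, Nat.card_eq_fintype_card]
  simp
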